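/- If D-almost every X_i is a linearly ordered topological space (LOTS) with inducing linear order ≤_i, then the ultraproduct order ∏_D ≤_i is a linear order on ∏_D X_i that induces the ultraproduct topology; in particular, ultraproducts of LOTS are LOTS. -/

import Mathlib

open Filter Topology Set

universe u v

def USetoid {I : Type u} (D : Ultrafilter I) (X : I → Type v) : Setoid (∀ i, X i) where
  r x y := ∀ᶠ i in (D : Filter I), x i = y i
  iseqv := ⟨fun _ => Filter.Eventually.of_forall fun _ => rfl,
    fun h => h.mono fun _ e => e.symm,
    fun h₁ h₂ => (h₁.and h₂).mono fun _ e => e.1.trans e.2⟩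

def Uprod {I : Type u} (D : Ultrafilter I) (X : I → Type v) := Quotient (USetoid D X)

def ultrabox {I : Type u} (D : Ultrafilter I) (X : I → Type v) (U : ∀ i, Set (X i)) :
    Set (Uprod D X) :=
  {q | ∃ x : ∀ i, X i, Quotient.mk (USetoid D X) x = q ∧ {i | x i ∈ U i} ∈ D}

def uTop {I : Type u} (D : Ultrafilter I) (X : I → Type v) [∀ i, TopologicalSpace (X i)] :
    TopologicalSpace (Uprod D X) :=
  TopologicalSpace.generateFrom
    {s | ∃ U : ∀ i, Set (X i), (∀ i, IsOpen (U i)) ∧ s = ultrabox D X U}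

/-- The topology generated by the open rays (hence by the open intervals, which
are their finite intersections) of a relation `le`, intended as a linear
order. -/
def rayTop {α : Type v} (le : α → α → Prop) : TopologicalSpace α :=
  TopologicalSpace.generateFrom
    ({s | ∃ a, s = {x | le x a ∧ x ≠ a}} ∪ {s | ∃ a, s = {x | le a x ∧ x ≠ a}})

/-- The ultraproduct order: `x/D ≤ y/D` iff `{i | x i ≤_i y i} ∈ D`. -/
def urel {I : Type u} (D : Ultrafilter I) (X : I → Type v)
    (le : ∀ i, X i → X i → Prop) : Uprod D X → Uprod D X → Prop :=
  fun q r => ∃ x y : ∀ i, X i, Quotient.mk (USetoid D X) x = q ∧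
    Quotient.mk (USetoid D X) y = r ∧ {i | le i (x i) (y i)} ∈ D

/-!
By Łoś's theorem the ultraproduct relation is a linear order, and the open ray above `[a]` is
exactly the ultrabox of the open rays above the `a i`; hence every ray is an open ultrabox.
Conversely, in a linear order the open intervals with optional endpoints are closed under
intersection, so they form a base of the order topology. Given a point `[x]` of an open ultrabox,
pick such an interval around each `x i` inside the box; the ultrabox of these intervals is again
an interval of the ultraproduct (each endpoint is present iff it is present for `D`-almost all
`i`), so the open ultrabox is a neighbourhood of `[x]` in the order topology.
-/

open Function

section Order
variable {α : Type v} (le : α → α → Prop)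

def ray (a : α) : Set α := {x | le a x ∧ x ≠ a}

def above (a : Option α) : Set α := {x | ∀ a' ∈ a, x ∈ ray le a'}

-- `none` stands for a missing endpoint, so rays and `univ` are intervals too.
def interval (a b : Option α) : Set α := above le a ∩ above (swap le) b

@[simp] theorem above_none : above le none = univ := by
  simp [above]

@[simp] theorem above_some (a : α) : above le (some a) = ray le a := by
  ext; simp [above]

theorem rayTop_swap : rayTop (swap le) = rayTop le := by
  unfold rayTop; rw [union_comm]

theorem isOpen_rayTop_ray (a : α) : IsOpen[rayTop le] (ray le a) :=
  TopologicalSpace.isOpen_generateFrom_of_mem (Or.inr ⟨a, rfl⟩)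

theorem isOpen_rayTop_above (a : Option α) : IsOpen[rayTop le] (above le a) := by
  cases a with
  | none => simp only [above_none]; exact @isOpen_univ _ (rayTop le)
  | some a => simpa using isOpen_rayTop_ray le a

theorem isOpen_rayTop_interval (a b : Option α) : IsOpen[rayTop le] (interval le a b) :=
  letI := rayTop le
  (isOpen_rayTop_above le a).inter (rayTop_swap le ▸ isOpen_rayTop_above (swap le) b)

variable {le}

theorem ray_subset_ray [IsPartialOrder α le] {a b : α} (hab : le a b) :
    ray le b ⊆ ray le a := by
  rintro x ⟨hbx, hxb⟩
  refine ⟨_root_.trans hab hbx, ?_⟩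
  rintro rfl
  exact hxb (antisymm hab hbx)

theorem exists_above_eq_inter [IsLinearOrder α le] (a₁ a₂ : Option α) :
    ∃ a, above le a = above le a₁ ∩ above le a₂ := by
  cases a₁ with
  | none => exact ⟨a₂, by simp⟩
  | some a₁ =>
    cases a₂ with
    | none => exact ⟨some a₁, by simp⟩
    | some a₂ =>
      rcases total_of le a₁ a₂ with h | h
      · exact ⟨some a₂, by simp only [above_some, inter_eq_right.2 (ray_subset_ray h)]⟩
      · exact ⟨some a₁, by simp only [above_some, inter_eq_left.2 (ray_subset_ray h)]⟩

theorem exists_interval_eq_inter [IsLinearOrder α le] (a₁ b₁ a₂ b₂ : Option α) :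
    ∃ a b, interval le a b = interval le a₁ b₁ ∩ interval le a₂ b₂ := by
  obtain ⟨a, ha⟩ := exists_above_eq_inter (le := le) a₁ a₂
  obtain ⟨b, hb⟩ := exists_above_eq_inter (le := swap le) b₁ b₂
  refine ⟨a, b, ?_⟩
  rw [interval, interval, interval, ha, hb]
  ac_rfl

theorem exists_interval_subset [IsLinearOrder α le] {U : Set α} (hU : IsOpen[rayTop le] U)
    {x : α} (hx : x ∈ U) : ∃ a b, x ∈ interval le a b ∧ interval le a b ⊆ U := by
  induction hU generalizing x with
  | basic s hs =>
    rcases hs with ⟨a, rfl⟩ | ⟨a, rfl⟩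
    · have hs : interval le none (some a) = ray (swap le) a := by
        simp only [interval, above_none, above_some, univ_inter]
      exact ⟨none, some a, hs ▸ hx, hs.subset⟩
    · have hs : interval le (some a) none = ray le a := by
        simp only [interval, above_none, above_some, inter_univ]
      exact ⟨some a, none, hs ▸ hx, hs.subset⟩
  | univ => exact ⟨none, none, by simp [interval], subset_univ _⟩
  | inter s t _ _ ihs iht =>
    obtain ⟨a₁, b₁, hx₁, hs⟩ := ihs hx.1
    obtain ⟨a₂, b₂, hx₂, ht⟩ := iht hx.2
    obtain ⟨a, b, hab⟩ := exists_interval_eq_inter (le := le) a₁ b₁ a₂ b₂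
    exact ⟨a, b, hab ▸ ⟨hx₁, hx₂⟩, hab ▸ inter_subset_inter hs ht⟩
  | sUnion S _ ih =>
    obtain ⟨s, hsS, hxs⟩ := hx
    obtain ⟨a, b, hxab, hab⟩ := ih s hsS hxs
    exact ⟨a, b, hxab, hab.trans (subset_sUnion_of_mem hsS)⟩

end Order

section Ultraproduct
variable {I : Type u} (D : Ultrafilter I) {X : I → Type v}

def Uprod.mk (x : ∀ i, X i) : Uprod D X := Quotient.mk (USetoid D X) x

theorem Uprod.ind {motive : Uprod D X → Prop} (h : ∀ x, motive (Uprod.mk D x))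
    (q : Uprod D X) : motive q :=
  Quotient.ind h q

theorem Uprod.mk_eq_mk_iff (x y : ∀ i, X i) :
    Uprod.mk D x = Uprod.mk D y ↔ ∀ᶠ i in D, x i = y i :=
  Quotient.eq

theorem urel_mk (le : ∀ i, X i → X i → Prop) (x y : ∀ i, X i) :
    urel D X le (Uprod.mk D x) (Uprod.mk D y) ↔ ∀ᶠ i in D, le i (x i) (y i) := by
  refine ⟨?_, fun h => ⟨x, y, rfl, rfl, h⟩⟩
  rintro ⟨x', y', hx, hy, h⟩
  filter_upwards [(Uprod.mk_eq_mk_iff D x' x).1 hx, (Uprod.mk_eq_mk_iff D y' y).1 hy, h]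
    with i hx hy h
  rwa [← hx, ← hy]

theorem urel_swap (le : ∀ i, X i → X i → Prop) :
    urel D X (fun i => swap (le i)) = swap (urel D X le) := by
  ext q r
  constructor <;> exact fun ⟨x, y, hx, hy, h⟩ => ⟨y, x, hy, hx, h⟩

theorem isLinearOrder_urel {le : ∀ i, X i → X i → Prop}
    (h : ∀ᶠ i in D, IsLinearOrder (X i) (le i)) : IsLinearOrder (Uprod D X) (urel D X le) where
  refl := Uprod.ind D fun x => (urel_mk D le x x).2 <| h.mono fun i _ => refl_of (le i) (x i)
  trans := Uprod.ind D fun x => Uprod.ind D fun y => Uprod.ind D fun z hxy hyz => by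
    rw [urel_mk] at hxy hyz ⊢
    filter_upwards [h, hxy, hyz] with i _ hxy hyz using _root_.trans hxy hyz
  antisymm := Uprod.ind D fun x => Uprod.ind D fun y hxy hyx => by
    rw [urel_mk] at hxy hyx
    rw [Uprod.mk_eq_mk_iff]
    filter_upwards [h, hxy, hyx] with i _ hxy hyx using antisymm hxy hyx
  total := Uprod.ind D fun x => Uprod.ind D fun y => by
    simp only [urel_mk]
    refine (D.eventually_or.1 ?_)
    filter_upwards [h] with i _ using total_of (le i) (x i) (y i)

theorem mem_ultrabox_mk (U : ∀ i, Set (X i)) (x : ∀ i, X i) :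
    Uprod.mk D x ∈ ultrabox D X U ↔ ∀ᶠ i in D, x i ∈ U i := by
  refine ⟨?_, fun h => ⟨x, rfl, h⟩⟩
  rintro ⟨x', hx, h⟩
  filter_upwards [(Uprod.mk_eq_mk_iff D x' x).1 hx, h] with i hx h
  rwa [← hx]

theorem ultrabox_mono {U V : ∀ i, Set (X i)} (h : ∀ᶠ i in D, U i ⊆ V i) :
    ultrabox D X U ⊆ ultrabox D X V := by
  refine Uprod.ind D fun x hx => ?_
  rw [mem_ultrabox_mk] at hx ⊢
  filter_upwards [h, hx] with i hUV hx using hUV hx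

theorem ultrabox_congr {U V : ∀ i, Set (X i)} (h : ∀ᶠ i in D, U i = V i) :
    ultrabox D X U = ultrabox D X V :=
  (ultrabox_mono D (h.mono fun _ h => h.subset)).antisymm
    (ultrabox_mono D (h.mono fun _ h => h.symm.subset))

theorem ultrabox_univ : ultrabox D X (fun _ => univ) = univ :=
  eq_univ_of_forall <| Uprod.ind D fun x => (mem_ultrabox_mk D _ x).2 (by simp)

theorem ultrabox_inter (U V : ∀ i, Set (X i)) :
    ultrabox D X (fun i => U i ∩ V i) = ultrabox D X U ∩ ultrabox D X V := by
  ext q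
  induction q using Uprod.ind D with | h x => ?_
  simp only [mem_inter_iff, mem_ultrabox_mk, eventually_and]

theorem ultrabox_ray (le : ∀ i, X i → X i → Prop) (a : ∀ i, X i) :
    ultrabox D X (fun i => ray (le i) (a i)) = ray (urel D X le) (Uprod.mk D a) := by
  ext q
  induction q using Uprod.ind D with | h x => ?_
  simp only [mem_ultrabox_mk, ray, mem_ofPred_eq, ne_eq, urel_mk, Uprod.mk_eq_mk_iff,
    ← Ultrafilter.eventually_not, eventually_and]

theorem exists_ultrabox_above_eq [∀ i, Nonempty (X i)] (le : ∀ i, X i → X i → Prop)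
    (a : ∀ i, Option (X i)) :
    ∃ A, ultrabox D X (fun i => above (le i) (a i)) = above (urel D X le) A := by
  by_cases hnone : ∀ᶠ i in D, a i = none
  · refine ⟨none, ?_⟩
    rw [above_none, ← ultrabox_univ D]
    exact ultrabox_congr D (hnone.mono fun i hi => by rw [hi, above_none])
  · obtain ⟨a', ha'⟩ := Filter.skolem.1 <|
      (Ultrafilter.eventually_not.2 hnone).mono fun i => Option.ne_none_iff_exists'.1
    refine ⟨some (Uprod.mk D a'), ?_⟩
    rw [above_some, ← ultrabox_ray]
    exact ultrabox_congr D (ha'.mono fun i hi => by rw [hi, above_some])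

theorem isOpen_rayTop_ultrabox_interval [∀ i, Nonempty (X i)] (le : ∀ i, X i → X i → Prop)
    (a b : ∀ i, Option (X i)) :
    IsOpen[rayTop (urel D X le)] (ultrabox D X fun i => interval (le i) (a i) (b i)) := by
  obtain ⟨A, hA⟩ := exists_ultrabox_above_eq D le a
  obtain ⟨B, hB⟩ := exists_ultrabox_above_eq D (fun i => swap (le i)) b
  rw [urel_swap] at hB
  unfold interval
  rw [ultrabox_inter, hA, hB]
  exact isOpen_rayTop_interval _ A B

variable [∀ i, TopologicalSpace (X i)]

theorem isOpen_uTop_ultrabox {U : ∀ i, Set (X i)} (h : ∀ᶠ i in D, IsOpen (U i)) :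
    IsOpen[uTop D X] (ultrabox D X U) := by
  classical
  rw [ultrabox_congr D (V := fun i => if IsOpen (U i) then U i else univ)
    (h.mono fun i hi => (if_pos hi).symm)]
  refine TopologicalSpace.isOpen_generateFrom_of_mem ⟨_, fun i => ?_, rfl⟩
  split_ifs with hi
  exacts [hi, isOpen_univ]

theorem isOpen_uTop_ray {le : ∀ i, X i → X i → Prop}
    (h : ∀ᶠ i in D, (inferInstance : TopologicalSpace (X i)) ≤ rayTop (le i))
    (q : Uprod D X) : IsOpen[uTop D X] (ray (urel D X le) q) := by
  induction q using Uprod.ind D with | h a => ?_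
  rw [← ultrabox_ray]
  exact isOpen_uTop_ultrabox D (h.mono fun i hi => hi _ (isOpen_rayTop_ray (le i) (a i)))

theorem uTop_le_rayTop {le : ∀ i, X i → X i → Prop}
    (h : ∀ᶠ i in D, (inferInstance : TopologicalSpace (X i)) ≤ rayTop (le i)) :
    uTop D X ≤ rayTop (urel D X le) := by
  refine le_generateFrom ?_
  rintro _ (⟨q, rfl⟩ | ⟨q, rfl⟩)
  · have := isOpen_uTop_ray D (le := fun i => swap (le i))
      (h.mono fun i hi => (rayTop_swap (le i)).symm ▸ hi) q
    rwa [urel_swap] at this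
  · exact isOpen_uTop_ray D h q

theorem rayTop_le_uTop {le : ∀ i, X i → X i → Prop}
    (hlin : ∀ᶠ i in D, IsLinearOrder (X i) (le i))
    (htop : ∀ᶠ i in D, rayTop (le i) ≤ (inferInstance : TopologicalSpace (X i))) :
    rayTop (urel D X le) ≤ uTop D X := by
  refine le_generateFrom ?_
  rintro _ ⟨U, hU, rfl⟩
  refine (@isOpen_iff_forall_mem_open _ (rayTop (urel D X le))).2 ?_
  rintro _ ⟨x, rfl, hx⟩
  have : ∀ i, Nonempty (X i) := fun i => ⟨x i⟩
  have hJ : ∀ᶠ i in D, ∃ ab : Option (X i) × Option (X i),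
      x i ∈ interval (le i) ab.1 ab.2 ∧ interval (le i) ab.1 ab.2 ⊆ U i := by
    filter_upwards [hlin, htop, hx] with i _ hle hxi
    obtain ⟨a, b, hab⟩ := exists_interval_subset (hle _ (hU i)) hxi
    exact ⟨(a, b), hab⟩
  obtain ⟨ab, hab⟩ := Filter.skolem.1 hJ
  exact ⟨_, ultrabox_mono D (hab.mono fun _ => And.right),
    isOpen_rayTop_ultrabox_interval D le (fun i => (ab i).1) (fun i => (ab i).2),
    (mem_ultrabox_mk D _ x).2 (hab.mono fun _ => And.left)⟩

end Ultraproduct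

theorem ultraproduct_LOTS {I : Type u} (D : Ultrafilter I) (X : I → Type u)
    [∀ i, TopologicalSpace (X i)] (le : ∀ i, X i → X i → Prop)
    (h : {i | IsLinearOrder (X i) (le i) ∧
      (inferInstance : TopologicalSpace (X i)) = rayTop (le i)} ∈ D) :
    IsLinearOrder (Uprod D X) (urel D X le) ∧ uTop D X = rayTop (urel D X le) := by
  have hlin : ∀ᶠ i in D, IsLinearOrder (X i) (le i) := mem_of_superset h fun _ hi => hi.1
  have htop : ∀ᶠ i in D, (inferInstance : TopologicalSpace (X i)) = rayTop (le i) :=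
    mem_of_superset h fun _ hi => hi.2
  exact ⟨isLinearOrder_urel D hlin, (uTop_le_rayTop D (htop.mono fun _ => le_of_eq)).antisymm
    (rayTop_le_uTop D hlin (htop.mono fun _ => ge_of_eq))⟩
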